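/- Let f(x) = 2(x ln x + (1-x) ln(1-x)), let w₀ ∈ (0,1), and let 0 < ε ≤ w₀(1-w₀)/2. Define u(w₀) = -f(w₀) + (f(w₀+ε) + f(w₀-ε))/2. Then |u(w₀) - ε²/(w₀(1-w₀))| ≤ (2/3) ε²/(w₀(1-w₀)); in particular (1/3)·ε²/(w₀(1-w₀)) ≤ u(w₀) ≤ (5/3)·ε²/(w₀(1-w₀)). -/

import Mathlib

/-!
Write `f = -2 · binEntropy` and put `g(t) = f(w₀ + t) + f(w₀ - t) - 2 f(w₀)`, so that
`u = g(ε) / 2`, `g(0) = g'(0) = 0` and `g''(t) = f''(w₀ + t) + f''(w₀ - t)` with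
`f''(x) = 2 / (x (1 - x))`. For `0 ≤ t ≤ w₀(1 - w₀)/2` this sum lies between `4 / (w₀(1 - w₀))`
and `20 / (3 w₀(1 - w₀))`, and integrating twice gives
`ε² / (w₀(1 - w₀)) ≤ u ≤ (5/3) ε² / (w₀(1 - w₀))`.
-/

open Real Set

theorem image_le_of_hasDerivAt_le {f f' B B' : ℝ → ℝ} {a b : ℝ}
    (hf : ∀ x ∈ Icc a b, HasDerivAt f (f' x) x) (hB : ∀ x ∈ Icc a b, HasDerivAt B (B' x) x)
    (ha : f a ≤ B a) (bound : ∀ x ∈ Icc a b, f' x ≤ B' x) : ∀ x ∈ Icc a b, f x ≤ B x :=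
  fun _ hx => image_le_of_deriv_right_le_deriv_boundary
    (fun x hx => (hf x hx).continuousAt.continuousWithinAt)
    (fun x hx => (hf x (Ico_subset_Icc_self hx)).hasDerivWithinAt) ha
    (fun x hx => (hB x hx).continuousAt.continuousWithinAt)
    (fun x hx => (hB x (Ico_subset_Icc_self hx)).hasDerivWithinAt)
    (fun x hx => bound x (Ico_subset_Icc_self hx)) hx

section SecondDerivative

variable {φ φ' φ'' : ℝ → ℝ} {ε : ℝ}

theorem mul_sq_div_two_le_of_le_deriv₂ {m : ℝ} (hφ : ∀ t ∈ Icc 0 ε, HasDerivAt φ (φ' t) t)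
    (hφ' : ∀ t ∈ Icc 0 ε, HasDerivAt φ' (φ'' t) t) (h₀ : φ 0 = 0) (h₀' : φ' 0 = 0)
    (hm : ∀ t ∈ Icc 0 ε, m ≤ φ'' t) : ∀ t ∈ Icc 0 ε, m * t ^ 2 / 2 ≤ φ t := by
  have hlin : ∀ t ∈ Icc 0 ε, m * t ≤ φ' t :=
    image_le_of_hasDerivAt_le (fun t _ => by simpa using (hasDerivAt_id t).const_mul m) hφ'
      (by simp [h₀']) hm
  refine image_le_of_hasDerivAt_le (fun t _ => ?_) hφ (by simp [h₀]) hlin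
  exact (((hasDerivAt_pow 2 t).const_mul m).div_const 2).congr_deriv (by ring)

theorem le_mul_sq_div_two_of_deriv₂_le {M : ℝ} (hφ : ∀ t ∈ Icc 0 ε, HasDerivAt φ (φ' t) t)
    (hφ' : ∀ t ∈ Icc 0 ε, HasDerivAt φ' (φ'' t) t) (h₀ : φ 0 = 0) (h₀' : φ' 0 = 0)
    (hM : ∀ t ∈ Icc 0 ε, φ'' t ≤ M) : ∀ t ∈ Icc 0 ε, φ t ≤ M * t ^ 2 / 2 := by
  intro t ht
  have := mul_sq_div_two_le_of_le_deriv₂ (φ := -φ) (φ' := -φ') (φ'' := -φ'') (m := -M)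
    (fun t ht => (hφ t ht).neg) (fun t ht => (hφ' t ht).neg) (by simp [h₀]) (by simp [h₀'])
    (fun t ht => neg_le_neg (hM t ht)) t ht
  simp only [Pi.neg_apply] at this
  linarith

end SecondDerivative

section SymmSecondDiff

def symmSecondDiff (F : ℝ → ℝ) (a t : ℝ) : ℝ := F (a + t) + F (a - t) - 2 * F a

variable {F F' F'' : ℝ → ℝ} {a ε : ℝ}

theorem hasDerivAt_comp_add_add_comp_sub {t : ℝ} (h_add : HasDerivAt F (F' (a + t)) (a + t))
    (h_sub : HasDerivAt F (F' (a - t)) (a - t)) :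
    HasDerivAt (fun s => F (a + s) + F (a - s)) (F' (a + t) - F' (a - t)) t := by
  have d_add := h_add.comp t ((hasDerivAt_id t).const_add a)
  have d_sub := h_sub.comp t ((hasDerivAt_id t).const_sub a)
  exact (d_add.add d_sub).congr_deriv (by ring)

theorem hasDerivAt_comp_add_sub_comp_sub {t : ℝ} (h_add : HasDerivAt F (F' (a + t)) (a + t))
    (h_sub : HasDerivAt F (F' (a - t)) (a - t)) :
    HasDerivAt (fun s => F (a + s) - F (a - s)) (F' (a + t) + F' (a - t)) t := by
  have d_add := h_add.comp t ((hasDerivAt_id t).const_add a)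
  have d_sub := h_sub.comp t ((hasDerivAt_id t).const_sub a)
  exact (d_add.sub d_sub).congr_deriv (by ring)

theorem symmSecondDiff_mem_Icc {m M : ℝ} (hε : 0 ≤ ε)
    (hF : ∀ x ∈ Icc (a - ε) (a + ε), HasDerivAt F (F' x) x)
    (hF' : ∀ x ∈ Icc (a - ε) (a + ε), HasDerivAt F' (F'' x) x)
    (hbound : ∀ t ∈ Icc 0 ε, F'' (a + t) + F'' (a - t) ∈ Icc m M) :
    symmSecondDiff F a ε ∈ Icc (m * ε ^ 2 / 2) (M * ε ^ 2 / 2) := by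
  have mem : ∀ t ∈ Icc 0 ε, a + t ∈ Icc (a - ε) (a + ε) ∧ a - t ∈ Icc (a - ε) (a + ε) :=
    fun t ⟨ht₀, htε⟩ => ⟨⟨by linarith, by linarith⟩, ⟨by linarith, by linarith⟩⟩
  have hg : ∀ t ∈ Icc 0 ε,
      HasDerivAt (symmSecondDiff F a) (F' (a + t) - F' (a - t)) t := fun t ht =>
    (hasDerivAt_comp_add_add_comp_sub (hF _ (mem t ht).1) (hF _ (mem t ht).2)).sub_const _
  have hg' : ∀ t ∈ Icc 0 ε,
      HasDerivAt (fun s => F' (a + s) - F' (a - s)) (F'' (a + t) + F'' (a - t)) t :=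
    fun t ht => hasDerivAt_comp_add_sub_comp_sub (hF' _ (mem t ht).1) (hF' _ (mem t ht).2)
  have h₀ : symmSecondDiff F a 0 = 0 := by
    simp only [symmSecondDiff, add_zero, sub_zero]
    ring
  have h₀' : F' (a + 0) - F' (a - 0) = 0 := by simp
  have hεmem : ε ∈ Icc 0 ε := ⟨hε, le_rfl⟩
  exact ⟨mul_sq_div_two_le_of_le_deriv₂ hg hg' h₀ h₀' (fun t ht => (hbound t ht).1) ε hεmem,
    le_mul_sq_div_two_of_deriv₂_le hg hg' h₀ h₀' (fun t ht => (hbound t ht).2) ε hεmem⟩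

end SymmSecondDiff

section BinEntropy

variable {p : ℝ}

theorem hasDerivAt_log_one_sub_sub_log (hp₀ : p ≠ 0) (hp₁ : p ≠ 1) :
    HasDerivAt (fun x => log (1 - x) - log x) (-1 / (p * (1 - p))) p := by
  have hq : 1 - p ≠ 0 := sub_ne_zero.mpr hp₁.symm
  refine ((((hasDerivAt_id p).const_sub 1).log hq).sub (hasDerivAt_log hp₀)).congr_deriv ?_
  simp only [id]
  field_simp
  ring

theorem two_div_mul_one_sub_add_two_div_mul_one_sub_mem_Icc {a t : ℝ} (ha₀ : 0 < a) (ha₁ : a < 1)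
    (ht₀ : 0 ≤ t) (ht : t ≤ a * (1 - a) / 2) :
    2 / ((a + t) * (1 - (a + t))) + 2 / ((a - t) * (1 - (a - t))) ∈
      Icc (4 / (a * (1 - a))) (20 / (3 * (a * (1 - a)))) := by
  have hq : 0 < a * (1 - a) := mul_pos ha₀ (by linarith)
  -- The two denominators are `q ± t (1 - 2a) - t²` with `q = a (1 - a)`; only their sum and
  -- product enter, and `t² ≤ q² / 4` keeps the product close to `q²`.
  have hP : 0 < (a + t) * (1 - (a + t)) := mul_pos (by linarith) (by nlinarith)
  have hQ : 0 < (a - t) * (1 - (a - t)) := mul_pos (by nlinarith) (by linarith)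
  rw [div_add_div _ _ hP.ne' hQ.ne']
  constructor
  · rw [div_le_div_iff₀ hq (mul_pos hP hQ)]
    nlinarith [sq_nonneg t, sq_nonneg (1 - 2 * a), sq_nonneg (t * t),
      mul_nonneg (mul_nonneg ht₀ ht₀) (sq_nonneg (1 - 2 * a))]
  · rw [div_le_div_iff₀ (mul_pos hP hQ) (by positivity)]
    nlinarith [sq_nonneg t, sq_nonneg (1 - 2 * a), sq_nonneg (t * t), sq_nonneg (a * (1 - a)),
      mul_nonneg (mul_nonneg ht₀ ht₀) (sq_nonneg (1 - 2 * a))]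

theorem symmSecondDiff_neg_two_mul_binEntropy_mem_Icc {a ε : ℝ} (ha₀ : 0 < a) (ha₁ : a < 1)
    (hε : 0 ≤ ε) (hεa : ε ≤ a * (1 - a) / 2) :
    symmSecondDiff (fun x => -2 * binEntropy x) a ε ∈
      Icc (2 * (ε ^ 2 / (a * (1 - a)))) (10 / 3 * (ε ^ 2 / (a * (1 - a)))) := by
  have hunit : ∀ x ∈ Icc (a - ε) (a + ε), x ≠ 0 ∧ x ≠ 1 := fun x ⟨h₁, h₂⟩ =>
    ⟨by nlinarith, by nlinarith⟩
  have h := symmSecondDiff_mem_Icc hε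
    (F' := fun x => -2 * (log (1 - x) - log x)) (F'' := fun x => 2 / (x * (1 - x)))
    (fun x hx => (hasDerivAt_binEntropy (hunit x hx).1 (hunit x hx).2).const_mul (-2))
    (fun x hx => ((hasDerivAt_log_one_sub_sub_log (hunit x hx).1 (hunit x hx).2).const_mul
      (-2)).congr_deriv (by ring))
    (fun t ⟨ht₀, htε⟩ =>
      two_div_mul_one_sub_add_two_div_mul_one_sub_mem_Icc ha₀ ha₁ ht₀ (htε.trans hεa))
  convert h using 2 <;> field_simp <;> ring

end BinEntropy

theorem stmt_5 (f : ℝ → ℝ)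
    (hf : ∀ x, f x = 2 * (x * Real.log x + (1 - x) * Real.log (1 - x)))
    (w₀ ε : ℝ) (hw₀ : w₀ ∈ Set.Ioo (0:ℝ) 1)
    (hε : 0 < ε) (hε' : ε ≤ w₀ * (1 - w₀) / 2)
    (u : ℝ) (hu : u = -f w₀ + (f (w₀ + ε) + f (w₀ - ε)) / 2) :
    |u - ε ^ 2 / (w₀ * (1 - w₀))| ≤ (2 / 3) * (ε ^ 2 / (w₀ * (1 - w₀))) ∧
    (1 / 3) * (ε ^ 2 / (w₀ * (1 - w₀))) ≤ u ∧
    u ≤ (5 / 3) * (ε ^ 2 / (w₀ * (1 - w₀))) := by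
  have hf_eq : f = fun x => -2 * binEntropy x := funext fun x => by
    rw [hf, binEntropy_eq_negMulLog_add_negMulLog_one_sub, negMulLog, negMulLog]
    ring
  have hu_eq : u = symmSecondDiff f w₀ ε / 2 := by rw [hu, symmSecondDiff]; ring
  obtain ⟨hlow, hupp⟩ :=
    symmSecondDiff_neg_two_mul_binEntropy_mem_Icc hw₀.1 hw₀.2 hε.le hε'
  rw [← hf_eq] at hlow hupp
  rw [hu_eq]
  refine ⟨abs_le.mpr ⟨?_, ?_⟩, ?_, ?_⟩ <;> linarith
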